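/- Under the hypotheses of the previous statement (U, V with orthonormal columns, E ∈ T⊥, ‖E‖_op ≤ 5/8, Ỹ the block matrix with off-diagonal block UVᵀ + E), the matrix I − Ỹ is positive semidefinite, its kernel contains range([U;V]), and rank(I − Ỹ) = 2n − r; moreover its smallest nonzero eigenvalue is at least 3/8. -/

import Mathlib

/-!
Write `Y = UVᵀ + E` and split `a = U (Uᵀa) + a⊥`, `b = V (Vᵀb) + b⊥`. Since `UᵀE = 0` and
`EV = 0`, the quadratic form of `I − Ỹ` at `(a, b)` equals
`‖Uᵀa − Vᵀb‖² + ‖a⊥‖² + ‖b⊥‖² − 2⟪a⊥, E b⊥⟫ ≥ ‖Uᵀa − Vᵀb‖² + (1 − ‖E‖)(‖a⊥‖² + ‖b⊥‖²)`.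
So `I − Ỹ` is positive semidefinite and, as `‖E‖ < 1`, its kernel is exactly the range of the
injective map `[U; V]`. An eigenvector for a nonzero eigenvalue is orthogonal to this kernel,
i.e. `Uᵀa = −Vᵀb`, and then the same bound shows that the eigenvalue is at least `1 − ‖E‖`.
-/

open Matrix

theorem dotProduct_self_nonneg {n : Type*} [Fintype n] (v : n → ℝ) : 0 ≤ v ⬝ᵥ v :=
  Fintype.sum_nonneg fun i => mul_self_nonneg (v i)

theorem two_mul_dotProduct_mulVec_le {m : Type*} [Fintype m] [DecidableEq m]
    {A : Matrix m m ℝ} {c : ℝ} (hA : ‖toEuclideanCLM (𝕜 := ℝ) A‖ ≤ c) (u w : m → ℝ) :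
    2 * (u ⬝ᵥ (A *ᵥ w)) ≤ c * (u ⬝ᵥ u + w ⬝ᵥ w) := by
  have hnorm (v : m → ℝ) : v ⬝ᵥ v = ‖WithLp.toLp 2 v‖ ^ 2 := by
    rw [← real_inner_self_eq_norm_sq, EuclideanSpace.inner_toLp_toLp, star_trivial]
  have hinner : u ⬝ᵥ (A *ᵥ w) ≤ ‖WithLp.toLp 2 u‖ * (c * ‖WithLp.toLp 2 w‖) := calc
    u ⬝ᵥ (A *ᵥ w) = inner ℝ (toEuclideanCLM (𝕜 := ℝ) A (WithLp.toLp 2 w)) (WithLp.toLp 2 u) := by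
      rw [toEuclideanCLM_toLp, EuclideanSpace.inner_toLp_toLp, star_trivial]
    _ ≤ ‖WithLp.toLp 2 u‖ * ‖toEuclideanCLM (𝕜 := ℝ) A (WithLp.toLp 2 w)‖ := by
      rw [mul_comm]; exact real_inner_le_norm _ _
    _ ≤ ‖WithLp.toLp 2 u‖ * (c * ‖WithLp.toLp 2 w‖) := by
      gcongr; exact (ContinuousLinearMap.le_opNorm _ _).trans (by gcongr)
  have hc : 0 ≤ c := (norm_nonneg _).trans hA
  rw [hnorm u, hnorm w]
  nlinarith [mul_nonneg hc (sq_nonneg (‖WithLp.toLp 2 u‖ - ‖WithLp.toLp 2 w‖))]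

section perpComponent

variable {m k : Type*} [Fintype m] [Fintype k] {U : Matrix m k ℝ}

def perpComponent (U : Matrix m k ℝ) (a : m → ℝ) : m → ℝ := a - U *ᵥ (Uᵀ *ᵥ a)

theorem perpComponent_eq_zero_iff {a : m → ℝ} :
    perpComponent U a = 0 ↔ a = U *ᵥ (Uᵀ *ᵥ a) :=
  sub_eq_zero

theorem mulVec_perpComponent {l : Type*} [Fintype l] {E : Matrix l m ℝ} (hEU : E * U = 0)
    (a : m → ℝ) : E *ᵥ perpComponent U a = E *ᵥ a := by
  rw [perpComponent, mulVec_sub, mulVec_mulVec, hEU, zero_mulVec, sub_zero]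

theorem perpComponent_dotProduct_of_transpose_mulVec_eq_zero (a : m → ℝ) {w : m → ℝ}
    (hw : Uᵀ *ᵥ w = 0) : perpComponent U a ⬝ᵥ w = a ⬝ᵥ w := by
  rw [perpComponent, sub_dotProduct, dotProduct_comm (U *ᵥ _), ← dotProduct_transpose_mulVec, hw,
    dotProduct_zero, sub_zero]

variable [DecidableEq k]

theorem transpose_mulVec_perpComponent (hU : Uᵀ * U = 1) (a : m → ℝ) :
    Uᵀ *ᵥ perpComponent U a = 0 := by
  rw [perpComponent, mulVec_sub, mulVec_mulVec, hU, one_mulVec, sub_self]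

theorem dotProduct_self_eq_add_perpComponent (hU : Uᵀ * U = 1) (a : m → ℝ) :
    a ⬝ᵥ a = (Uᵀ *ᵥ a) ⬝ᵥ (Uᵀ *ᵥ a) + perpComponent U a ⬝ᵥ perpComponent U a := by
  have hperp : perpComponent U a ⬝ᵥ (U *ᵥ (Uᵀ *ᵥ a)) = 0 := by
    rw [dotProduct_mulVec, ← mulVec_transpose, transpose_mulVec_perpComponent hU, zero_dotProduct]
  have hproj : (U *ᵥ (Uᵀ *ᵥ a)) ⬝ᵥ (U *ᵥ (Uᵀ *ᵥ a)) = (Uᵀ *ᵥ a) ⬝ᵥ (Uᵀ *ᵥ a) := by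
    rw [← dotProduct_transpose_mulVec, mulVec_mulVec, hU, one_mulVec]
  have ha : a = U *ᵥ (Uᵀ *ᵥ a) + perpComponent U a := (add_sub_cancel _ _).symm
  conv_lhs => rw [ha]
  rw [add_dotProduct, dotProduct_add, dotProduct_add, hproj, dotProduct_comm (U *ᵥ _), hperp]
  ring

end perpComponent

section dilation

variable {m l : Type*} [DecidableEq m] [DecidableEq l]

theorem isHermitian_one_sub_fromBlocks (Y : Matrix m l ℝ) :
    (1 - fromBlocks 0 Y Yᵀ 0).IsHermitian := by
  refine isHermitian_one.sub ?_
  simp only [IsHermitian, conjTranspose_eq_transpose_of_trivial, fromBlocks_transpose,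
    transpose_transpose, transpose_zero]

variable [Fintype m] [Fintype l]

theorem one_sub_fromBlocks_mulVec_sumElim (Y : Matrix m l ℝ) (a : m → ℝ) (b : l → ℝ) :
    (1 - fromBlocks 0 Y Yᵀ 0) *ᵥ Sum.elim a b = Sum.elim (a - Y *ᵥ b) (b - Yᵀ *ᵥ a) := by
  rw [sub_mulVec, one_mulVec, fromBlocks_mulVec]
  ext (i | i) <;> simp

theorem sumElim_dotProduct_one_sub_fromBlocks_mulVec (Y : Matrix m l ℝ) (a : m → ℝ)
    (b : l → ℝ) : Sum.elim a b ⬝ᵥ ((1 - fromBlocks 0 Y Yᵀ 0) *ᵥ Sum.elim a b) =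
      a ⬝ᵥ a + b ⬝ᵥ b - 2 * (a ⬝ᵥ (Y *ᵥ b)) := by
  rw [one_sub_fromBlocks_mulVec_sumElim, sumElim_dotProduct_sumElim, dotProduct_sub,
    dotProduct_sub, dotProduct_transpose_mulVec]
  ring

end dilation

theorem rank_fromRows_of_transpose_mul_self_eq_one {m m' k : Type*} [Fintype m] [Fintype m']
    [Fintype k] [DecidableEq k] {U : Matrix m k ℝ} (hU : Uᵀ * U = 1) (V : Matrix m' k ℝ) :
    (fromRows U V).rank = Fintype.card k := by
  have hinj : Function.Injective (fromRows U V).mulVecLin := by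
    intro c c' h
    have hU' : U *ᵥ c = U *ᵥ c' := by
      simpa only [mulVecLin_apply, fromRows_mulVec, Sum.elim_comp_inl]
        using congr_arg (· ∘ Sum.inl) h
    simpa only [mulVec_mulVec, hU, one_mulVec] using congr_arg (Uᵀ *ᵥ ·) hU'
  rw [rank, LinearMap.finrank_range_of_inj hinj, Module.finrank_pi]

section perturbedDilation

variable {m k : Type*} [Fintype m] [Fintype k] {U V : Matrix m k ℝ} {E : Matrix m m ℝ}

theorem dotProduct_mulVec_eq_add_perpComponent (hUE : Uᵀ * E = 0) (hEV : E * V = 0)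
    (a b : m → ℝ) : a ⬝ᵥ ((U * Vᵀ + E) *ᵥ b) =
      (Uᵀ *ᵥ a) ⬝ᵥ (Vᵀ *ᵥ b) + perpComponent U a ⬝ᵥ (E *ᵥ perpComponent V b) := by
  have hUEb : Uᵀ *ᵥ (E *ᵥ b) = 0 := by rw [mulVec_mulVec, hUE, zero_mulVec]
  rw [mulVec_perpComponent hEV, perpComponent_dotProduct_of_transpose_mulVec_eq_zero a hUEb,
    add_mulVec, ← mulVec_mulVec, dotProduct_add, ← dotProduct_transpose_mulVec,
    dotProduct_comm (Vᵀ *ᵥ b)]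

variable [DecidableEq m] [DecidableEq k]

theorem one_sub_fromBlocks_mul_fromRows (hU : Uᵀ * U = 1) (hV : Vᵀ * V = 1)
    (hUE : Uᵀ * E = 0) (hEV : E * V = 0) :
    (1 - fromBlocks 0 (U * Vᵀ + E) (U * Vᵀ + E)ᵀ 0) * fromRows U V = 0 := by
  have hEU : Eᵀ * U = 0 := by rw [← transpose_transpose U, ← transpose_mul, hUE, transpose_zero]
  have hYV : (U * Vᵀ + E) * V = U := by
    rw [Matrix.add_mul, Matrix.mul_assoc, hV, Matrix.mul_one, hEV, add_zero]
  have hYU : (U * Vᵀ + E)ᵀ * U = V := by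
    rw [transpose_add, transpose_mul, transpose_transpose, Matrix.add_mul, Matrix.mul_assoc, hU,
      Matrix.mul_one, hEU, add_zero]
  rw [Matrix.sub_mul, Matrix.one_mul, fromBlocks_mul_fromRows, hYV, hYU]
  simp

theorem le_sumElim_dotProduct_one_sub_fromBlocks_mulVec (hU : Uᵀ * U = 1) (hV : Vᵀ * V = 1)
    (hUE : Uᵀ * E = 0) (hEV : E * V = 0) {c : ℝ} (hE : ‖toEuclideanCLM (𝕜 := ℝ) E‖ ≤ c)
    (a b : m → ℝ) :
    (Uᵀ *ᵥ a - Vᵀ *ᵥ b) ⬝ᵥ (Uᵀ *ᵥ a - Vᵀ *ᵥ b) + (1 - c) *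
        (perpComponent U a ⬝ᵥ perpComponent U a + perpComponent V b ⬝ᵥ perpComponent V b) ≤
      Sum.elim a b ⬝ᵥ ((1 - fromBlocks 0 (U * Vᵀ + E) (U * Vᵀ + E)ᵀ 0) *ᵥ Sum.elim a b) := by
  have hEperp := two_mul_dotProduct_mulVec_le hE (perpComponent U a) (perpComponent V b)
  rw [sumElim_dotProduct_one_sub_fromBlocks_mulVec, dotProduct_mulVec_eq_add_perpComponent hUE hEV,
    dotProduct_self_eq_add_perpComponent hU a, dotProduct_self_eq_add_perpComponent hV b,
    sub_dotProduct, dotProduct_sub, dotProduct_sub, dotProduct_comm (Vᵀ *ᵥ b)]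
  linarith

theorem posSemidef_one_sub_fromBlocks (hU : Uᵀ * U = 1) (hV : Vᵀ * V = 1)
    (hUE : Uᵀ * E = 0) (hEV : E * V = 0) (hE : ‖toEuclideanCLM (𝕜 := ℝ) E‖ ≤ 1) :
    (1 - fromBlocks 0 (U * Vᵀ + E) (U * Vᵀ + E)ᵀ 0).PosSemidef := by
  refine posSemidef_iff_dotProduct_mulVec.2 ⟨isHermitian_one_sub_fromBlocks _, fun x => ?_⟩
  rw [star_trivial, ← Sum.elim_comp_inl_inr x]
  have hlow := le_sumElim_dotProduct_one_sub_fromBlocks_mulVec hU hV hUE hEV hE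
    (x ∘ Sum.inl) (x ∘ Sum.inr)
  linarith [dotProduct_self_nonneg (Uᵀ *ᵥ (x ∘ Sum.inl) - Vᵀ *ᵥ (x ∘ Sum.inr))]

theorem one_sub_fromBlocks_mulVec_eq_zero_iff (hU : Uᵀ * U = 1) (hV : Vᵀ * V = 1)
    (hUE : Uᵀ * E = 0) (hEV : E * V = 0) (hE : ‖toEuclideanCLM (𝕜 := ℝ) E‖ < 1)
    (x : m ⊕ m → ℝ) :
    (1 - fromBlocks 0 (U * Vᵀ + E) (U * Vᵀ + E)ᵀ 0) *ᵥ x = 0 ↔ ∃ c, fromRows U V *ᵥ c = x := by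
  refine ⟨fun hx => ?_, ?_⟩
  · rw [← Sum.elim_comp_inl_inr x] at hx ⊢
    set a := x ∘ Sum.inl
    set b := x ∘ Sum.inr
    have hlow := le_sumElim_dotProduct_one_sub_fromBlocks_mulVec hU hV hUE hEV le_rfl a b
    rw [hx, dotProduct_zero] at hlow
    have hab := dotProduct_self_nonneg (Uᵀ *ᵥ a - Vᵀ *ᵥ b)
    have ha := dotProduct_self_nonneg (perpComponent U a)
    have hb := dotProduct_self_nonneg (perpComponent V b)
    have hgap : 0 < 1 - ‖toEuclideanCLM (𝕜 := ℝ) E‖ := sub_pos.2 hE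
    have ha0 : perpComponent U a = 0 := dotProduct_self_eq_zero.1 (by nlinarith)
    have hb0 : perpComponent V b = 0 := dotProduct_self_eq_zero.1 (by nlinarith)
    have hab0 : Uᵀ *ᵥ a = Vᵀ *ᵥ b := sub_eq_zero.1 (dotProduct_self_eq_zero.1 (by nlinarith))
    refine ⟨Uᵀ *ᵥ a, ?_⟩
    rw [fromRows_mulVec, ← perpComponent_eq_zero_iff.1 ha0, hab0,
      ← perpComponent_eq_zero_iff.1 hb0]
  · rintro ⟨c, rfl⟩
    rw [mulVec_mulVec, one_sub_fromBlocks_mul_fromRows hU hV hUE hEV, zero_mulVec]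

theorem rank_one_sub_fromBlocks (hU : Uᵀ * U = 1) (hV : Vᵀ * V = 1)
    (hUE : Uᵀ * E = 0) (hEV : E * V = 0) (hE : ‖toEuclideanCLM (𝕜 := ℝ) E‖ < 1) :
    (1 - fromBlocks 0 (U * Vᵀ + E) (U * Vᵀ + E)ᵀ 0).rank =
      2 * Fintype.card m - Fintype.card k := by
  have hker : LinearMap.ker (1 - fromBlocks 0 (U * Vᵀ + E) (U * Vᵀ + E)ᵀ 0).mulVecLin =
      LinearMap.range (fromRows U V).mulVecLin := by
    ext x
    simpa only [LinearMap.mem_ker, LinearMap.mem_range, mulVecLin_apply]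
      using one_sub_fromBlocks_mulVec_eq_zero_iff hU hV hUE hEV hE x
  have hnullity := LinearMap.finrank_range_add_finrank_ker
    (1 - fromBlocks 0 (U * Vᵀ + E) (U * Vᵀ + E)ᵀ 0).mulVecLin
  rw [hker, ← rank, ← rank, rank_fromRows_of_transpose_mul_self_eq_one hU, Module.finrank_pi,
    Fintype.card_sum] at hnullity
  omega

theorem mul_dotProduct_self_le_of_transpose_mulVec_add_eq_zero (hU : Uᵀ * U = 1)
    (hV : Vᵀ * V = 1) (hUE : Uᵀ * E = 0) (hEV : E * V = 0) {c : ℝ}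
    (hE : ‖toEuclideanCLM (𝕜 := ℝ) E‖ ≤ c) {a b : m → ℝ} (hab : Uᵀ *ᵥ a + Vᵀ *ᵥ b = 0) :
    (1 - c) * (Sum.elim a b ⬝ᵥ Sum.elim a b) ≤
      Sum.elim a b ⬝ᵥ ((1 - fromBlocks 0 (U * Vᵀ + E) (U * Vᵀ + E)ᵀ 0) *ᵥ Sum.elim a b) := by
  have hlow := le_sumElim_dotProduct_one_sub_fromBlocks_mulVec hU hV hUE hEV hE a b
  have hb : Vᵀ *ᵥ b = -(Uᵀ *ᵥ a) := eq_neg_of_add_eq_zero_right hab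
  rw [hb, sub_neg_eq_add, add_dotProduct, dotProduct_add] at hlow
  rw [sumElim_dotProduct_sumElim, dotProduct_self_eq_add_perpComponent hU a,
    dotProduct_self_eq_add_perpComponent hV b, hb, neg_dotProduct, dotProduct_neg, neg_neg]
  have hc : 0 ≤ c := (norm_nonneg _).trans hE
  nlinarith [dotProduct_self_nonneg (Uᵀ *ᵥ a), mul_nonneg hc (dotProduct_self_nonneg (Uᵀ *ᵥ a))]

theorem le_of_one_sub_fromBlocks_mulVec_eq_smul (hU : Uᵀ * U = 1) (hV : Vᵀ * V = 1)
    (hUE : Uᵀ * E = 0) (hEV : E * V = 0) {c : ℝ} (hE : ‖toEuclideanCLM (𝕜 := ℝ) E‖ ≤ c)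
    {μ : ℝ} (hμ : μ ≠ 0) {x : m ⊕ m → ℝ} (hx : x ≠ 0)
    (hxμ : (1 - fromBlocks 0 (U * Vᵀ + E) (U * Vᵀ + E)ᵀ 0) *ᵥ x = μ • x) : 1 - c ≤ μ := by
  set M := 1 - fromBlocks 0 (U * Vᵀ + E) (U * Vᵀ + E)ᵀ 0
  have hsymm : Mᵀ = M := (isHermitian_one_sub_fromBlocks _).eq
  -- an eigenvector for a nonzero eigenvalue is orthogonal to the kernel, which contains `[U; V]`
  have horth : (fromRows U V)ᵀ *ᵥ x = 0 := by
    have hμx : μ • ((fromRows U V)ᵀ *ᵥ x) = 0 := by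
      rw [← mulVec_smul, ← hxμ, mulVec_mulVec, ← hsymm, ← transpose_mul,
        one_sub_fromBlocks_mul_fromRows hU hV hUE hEV, transpose_zero, zero_mulVec]
    exact (smul_eq_zero.1 hμx).resolve_left hμ
  rw [transpose_fromRows, fromCols_mulVec] at horth
  have hxx : 0 < x ⬝ᵥ x := lt_of_le_of_ne (dotProduct_self_nonneg x)
    (Ne.symm (mt dotProduct_self_eq_zero.1 hx))
  have hbound := mul_dotProduct_self_le_of_transpose_mulVec_add_eq_zero hU hV hUE hEV hE horth
  rw [Sum.elim_comp_inl_inr, hxμ, dotProduct_smul, smul_eq_mul] at hbound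
  exact le_of_mul_le_mul_right (by linarith) hxx

end perturbedDilation

theorem stmt12_general (n r : ℕ)
    (U V : Matrix (Fin n) (Fin r) ℝ) (hU : Uᵀ * U = 1) (hV : Vᵀ * V = 1)
    (E : Matrix (Fin n) (Fin n) ℝ) (hUE : Uᵀ * E = 0) (hEV : E * V = 0)
    (hEnorm : ‖Matrix.toEuclideanCLM (𝕜 := ℝ) E‖ ≤ 5 / 8)
    (Ytilde : Matrix (Fin n ⊕ Fin n) (Fin n ⊕ Fin n) ℝ)
    (hYtilde : Ytilde = Matrix.fromBlocks 0 (U * Vᵀ + E) (U * Vᵀ + E)ᵀ 0) :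
    (1 - Ytilde).PosSemidef ∧
    (∀ c : Fin r → ℝ,
      (1 - Ytilde).mulVec (Sum.elim (U.mulVec c) (V.mulVec c)) = 0) ∧
    (1 - Ytilde).rank = 2 * n - r ∧
    (∀ (μ : ℝ) (x : Fin n ⊕ Fin n → ℝ), x ≠ 0 →
      (1 - Ytilde).mulVec x = μ • x → μ = 0 ∨ (3 / 8 : ℝ) ≤ μ) := by
  subst hYtilde
  have hE : ‖toEuclideanCLM (𝕜 := ℝ) E‖ < 1 := hEnorm.trans_lt (by norm_num)
  refine ⟨posSemidef_one_sub_fromBlocks hU hV hUE hEV hE.le, fun c => ?_, ?_,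
    fun μ x hx hxμ => or_iff_not_imp_left.2 fun hμ => ?_⟩
  · rw [← fromRows_mulVec, mulVec_mulVec, one_sub_fromBlocks_mul_fromRows hU hV hUE hEV,
      zero_mulVec]
  · simpa only [Fintype.card_fin] using rank_one_sub_fromBlocks hU hV hUE hEV hE
  · have hμ38 := le_of_one_sub_fromBlocks_mulVec_eq_smul hU hV hUE hEV hEnorm hμ hx hxμ
    linarith

/-- With `Y₀ = UVᵀ + E`, `E ∈ T⊥`, `‖E‖_op ≤ 5/8`, the matrix `I − Ỹ` is PSD, its kernel
contains the range of `[U; V]`, its rank is `2n − r`, and every nonzero eigenvalue is at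
least `3/8`. -/
theorem stmt12 (n r : ℕ) (hrn : r ≤ n)
    (U V : Matrix (Fin n) (Fin r) ℝ) (hU : Uᵀ * U = 1) (hV : Vᵀ * V = 1)
    (E : Matrix (Fin n) (Fin n) ℝ) (hUE : Uᵀ * E = 0) (hEV : E * V = 0)
    (hEnorm : ‖Matrix.toEuclideanCLM (𝕜 := ℝ) E‖ ≤ 5 / 8)
    (Ytilde : Matrix (Fin n ⊕ Fin n) (Fin n ⊕ Fin n) ℝ)
    (hYtilde : Ytilde = Matrix.fromBlocks 0 (U * Vᵀ + E) (U * Vᵀ + E)ᵀ 0) :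
    (1 - Ytilde).PosSemidef ∧
    (∀ c : Fin r → ℝ,
      (1 - Ytilde).mulVec (Sum.elim (U.mulVec c) (V.mulVec c)) = 0) ∧
    (1 - Ytilde).rank = 2 * n - r ∧
    (∀ (μ : ℝ) (x : Fin n ⊕ Fin n → ℝ), x ≠ 0 →
      (1 - Ytilde).mulVec x = μ • x → μ = 0 ∨ (3 / 8 : ℝ) ≤ μ) :=
  stmt12_general n r U V hU hV E hUE hEV hEnorm Ytilde hYtilde
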